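/- Let k ≥ 0 and ℓ > 0 be integers, d = 3k + 2, and d' = d + 2ℓ. There exists an integral simplex P ⊂ ℝ^{d'} of dimension d' whose δ-vector (δ_0, …, δ_{d'}) satisfies δ_0 = δ_{k+ℓ+1} = δ_{2k+ℓ+2} = 1 and δ_j = 0 for all j ∉ {0, k+ℓ+1, 2k+ℓ+2}. -/

import Mathlib

open Finset MeasureTheory

/-- A point of `ℝ^N` has integer coordinates. -/
def IsLatticePt {N : ℕ} (x : Fin N → ℝ) : Prop := ∀ j, ∃ z : ℤ, x j = (z : ℝ)

/-- `P ⊂ ℝ^N` is an integral convex polytope of dimension `d`: the convex hull of a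
nonempty finite set of lattice points, whose affine hull has dimension `d`. -/
def IsIntegralPolytope (N d : ℕ) (P : Set (Fin N → ℝ)) : Prop :=
  (∃ V : Finset (Fin N → ℝ), V.Nonempty ∧ (∀ v ∈ V, IsLatticePt v) ∧
    P = convexHull ℝ (V : Set (Fin N → ℝ))) ∧
  Module.finrank ℝ (vectorSpan ℝ P) = d

/-- `i(P, n) = |nP ∩ ℤ^N|`, the number of lattice points in the `n`-th dilate of `P`. -/
noncomputable def ehrhart {N : ℕ} (P : Set (Fin N → ℝ)) (n : ℕ) : ℕ :=
  Set.ncard {x : Fin N → ℝ | x ∈ (fun p => (n : ℝ) • p) '' P ∧ IsLatticePt x}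

/-- The `i`-th entry of the δ-vector of a `d`-dimensional polytope `P`, via the
formula `δ_i = Σ_{j=0}^i (−1)^j C(d+1, j) i(P, i−j)`, which is equivalent to the
generating-function definition `(1−λ)^{d+1}(1 + Σ_{n≥1} i(P,n) λ^n) = Σ_i δ_i λ^i`. -/
noncomputable def deltaVector {N : ℕ} (d : ℕ) (P : Set (Fin N → ℝ)) (i : ℕ) : ℤ :=
  ∑ j ∈ Finset.range (i + 1),
    (-1 : ℤ) ^ j * (Nat.choose (d + 1) j : ℤ) * (ehrhart P (i - j) : ℤ)

open scoped Pointwise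

/-!
Let `P ⊂ ℝ^D` be the simplex with vertices `e_1, …, e_D` and an apex `u ∈ ℤ^D` with
`Σ u_j = q + 1`, `q > 0`. A point `x ∈ nP` has apex coordinate `a = (Σ x_j - n) / q` and
remaining coordinates `x_j - a u_j`. For a lattice point `x` write `q a = q m + r` with
`0 ≤ r < q`; then `x - m u - b_r`, where `b_r = (⌈r u_j / q⌉)_j`, has nonnegative integer
coordinates. So every lattice point of `nP` is uniquely a box point `b_r` plus a nonnegative
integer combination of the vertices, and `i(P, n) = Σ C(n - h_r + D, D)` over the `r < q` with
`h_r ≤ n`, where `h_r = Σ_j ⌈r u_j / q⌉ - r` is the height of `b_r`. Inverting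
`(1 - λ)^{D+1} Σ_n C(n + D, D) λ^n = 1` then shows that `δ_i` counts the `r` with `h_r = i`.
For `u = (1^ℓ, 2^{k+2}, (-1)^{2k+ℓ})` and `q = 3` the heights are `0`, `k + ℓ + 1` and
`2k + ℓ + 2`.
-/

theorem Finset.Nat.card_antidiagonalTuple (k n : ℕ) :
    #(Finset.Nat.antidiagonalTuple k n) = k.multichoose n := by
  classical
  rw [← Fintype.card_coe]
  refine (Fintype.card_congr <|
    (Equiv.subtypeEquivRight fun _ => Finset.Nat.mem_antidiagonalTuple).trans
      (Sym.equivNatSumOfFintype (Fin k) n).symm).trans ?_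
  rw [Sym.card_sym_eq_multichoose, Fintype.card_fin]

section AlternatingSums

open PowerSeries

theorem PowerSeries.coeff_one_sub_X_pow (N n : ℕ) :
    coeff n ((1 - X : PowerSeries ℤ) ^ N) = (-1) ^ n * N.choose n := by
  have h : (1 - X : PowerSeries ℤ) =
      rescale (-1) ((1 + Polynomial.X : Polynomial ℤ) : PowerSeries ℤ) := by
    simp [sub_eq_add_neg]
  rw [h, ← map_pow, coeff_rescale, ← Polynomial.coe_pow, Polynomial.coeff_coe,
    Polynomial.coeff_one_add_X_pow]

theorem sum_range_alternating_choose_mul_choose_add (D s : ℕ) :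
    ∑ j ∈ range (s + 1), (-1 : ℤ) ^ j * (D + 1).choose j * (s - j + D).choose D =
      if s = 0 then 1 else 0 := by
  have h := congrArg (coeff s) (mk_add_choose_mul_one_sub_pow_eq_one ℤ D)
  rw [coeff_mul, coeff_one, Finset.Nat.sum_antidiagonal_eq_sum_range_succ
    (fun a b => coeff a (mk fun n => ((D + n).choose D : ℤ)) * coeff b ((1 - X) ^ (D + 1)))] at h
  simp only [coeff_mk, coeff_one_sub_X_pow] at h
  rw [← h, ← sum_range_reflect]
  refine sum_congr rfl fun j hj => ?_
  rw [mem_range] at hj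
  rw [show s + 1 - 1 - j = s - j by omega, show s - (s - j) = j by omega, add_comm j D]
  ring

theorem sum_range_alternating_choose_mul_shifted_choose (D h i : ℕ) :
    ∑ j ∈ range (i + 1), (-1 : ℤ) ^ j * (D + 1).choose j *
        (if h ≤ i - j then ((i - j - h + D).choose D : ℤ) else 0) = if h = i then 1 else 0 := by
  by_cases hhi : h ≤ i
  · obtain ⟨s, rfl⟩ := Nat.exists_eq_add_of_le hhi
    rw [← sum_subset (range_subset_range.2 (by omega : s + 1 ≤ h + s + 1))]
    · simp only [left_eq_add]
      rw [← sum_range_alternating_choose_mul_choose_add D s]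
      refine sum_congr rfl fun j hj => ?_
      rw [mem_range] at hj
      rw [if_pos (by omega), show h + s - j - h = s - j by omega]
    · intro j hj hjs
      rw [mem_range] at hj hjs
      rw [if_neg (by omega), mul_zero]
  · rw [if_neg (by omega)]
    exact sum_eq_zero fun j _ => by rw [if_neg (by omega), mul_zero]

end AlternatingSums

theorem deltaVector_eq_card_of_ehrhart_eq {N D : ℕ} {P : Set (Fin N → ℝ)} {ι : Type*}
    (s : Finset ι) (h : ι → ℕ)
    (hP : ∀ n, ehrhart P n = ∑ r ∈ s, if h r ≤ n then (n - h r + D).choose D else 0) (i : ℕ) :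
    deltaVector D P i = #{r ∈ s | h r = i} := by
  simp only [deltaVector, hP, Nat.cast_sum, Nat.cast_ite, Nat.cast_zero, mul_sum]
  rw [sum_comm, card_filter, Nat.cast_sum]
  refine sum_congr rfl fun r _ => ?_
  rw [sum_range_alternating_choose_mul_shifted_choose]
  split_ifs <;> rfl

theorem convexHull_range_eq_image_stdSimplex {ι E : Type*} [Fintype ι] [AddCommGroup E]
    [Module ℝ E] (v : ι → E) :
    convexHull ℝ (Set.range v) = Fintype.linearCombination ℝ v '' stdSimplex ℝ ι := by
  classical
  rw [← convexHull_rangle_single_eq_stdSimplex, LinearMap.image_convexHull, ← Set.range_comp]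
  congr 2
  ext i
  simp [Fintype.linearCombination_apply_single]

theorem mem_smul_convexHull_range_iff {ι E : Type*} [Fintype ι] [Nonempty ι] [AddCommGroup E]
    [Module ℝ E] (v : ι → E) {c : ℝ} (hc : 0 ≤ c) (x : E) :
    x ∈ c • convexHull ℝ (Set.range v) ↔
      ∃ w : ι → ℝ, (∀ i, 0 ≤ w i) ∧ ∑ i, w i = c ∧ ∑ i, w i • v i = x := by
  rcases hc.eq_or_lt with rfl | hc
  · rw [Set.zero_smul_set ((Set.range_nonempty v).convexHull), Set.mem_zero]
    constructor
    · rintro rfl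
      exact ⟨0, fun _ => le_rfl, by simp, by simp⟩
    · rintro ⟨w, hw, hsum, rfl⟩
      have hw0 : w = 0 := funext fun i =>
        (sum_eq_zero_iff_of_nonneg fun i _ => hw i).1 hsum i (mem_univ i)
      simp [hw0]
  · rw [Set.mem_smul_set_iff_inv_smul_mem₀ hc.ne', convexHull_range_eq_image_stdSimplex]
    simp only [Set.mem_image, stdSimplex, Set.mem_ofPred_eq, Fintype.linearCombination_apply]
    constructor
    · rintro ⟨w, ⟨hw0, hw1⟩, hwx⟩
      refine ⟨c • w, fun i => mul_nonneg hc.le (hw0 i), by simp [← mul_sum, hw1], ?_⟩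
      simp only [Pi.smul_apply, smul_eq_mul, mul_smul, ← smul_sum, hwx, smul_inv_smul₀ hc.ne']
    · rintro ⟨w, hw0, hw1, rfl⟩
      refine ⟨c⁻¹ • w, ⟨fun i => mul_nonneg (inv_nonneg.2 hc.le) (hw0 i), ?_⟩, ?_⟩
      · simp [← mul_sum, hw1, hc.ne']
      · simp only [Pi.smul_apply, smul_eq_mul, mul_smul, ← smul_sum]

section ApexSimplex

variable {D : ℕ} (u : Fin D → ℤ)

def apexSimplexVertex : Fin (D + 1) → Fin D → ℝ :=
  Fin.snoc (α := fun _ => Fin D → ℝ) (fun i => Pi.single i 1) (fun j => (u j : ℝ))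

def apexSimplex : Set (Fin D → ℝ) :=
  convexHull ℝ (Set.range (apexSimplexVertex u))

theorem sum_smul_apexSimplexVertex_apply (w : Fin (D + 1) → ℝ) (j : Fin D) :
    (∑ t, w t • apexSimplexVertex u t) j = w j.castSucc + w (Fin.last D) * u j := by
  simp [Fin.sum_univ_castSucc, apexSimplexVertex, Pi.single_apply]

theorem isLatticePt_apexSimplexVertex (t : Fin (D + 1)) : IsLatticePt (apexSimplexVertex u t) := by
  intro j
  induction t using Fin.lastCases with
  | last => exact ⟨u j, by simp [apexSimplexVertex]⟩
  | cast i => exact ⟨if j = i then 1 else 0, by simp [apexSimplexVertex, Pi.single_apply]⟩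

theorem affineIndependent_apexSimplexVertex (hu : ∑ j, u j ≠ 1) :
    AffineIndependent ℝ (apexSimplexVertex u) := by
  rw [affineIndependent_iff_of_fintype]
  intro w hw hwv
  rw [weightedVSub_eq_linear_combination _ hw] at hwv
  have hcoord (j : Fin D) : w j.castSucc + w (Fin.last D) * u j = 0 := by
    rw [← sum_smul_apexSimplexVertex_apply, hwv, Pi.zero_apply]
  have hlast : w (Fin.last D) = 0 := by
    have hsum : ∑ j, (w j.castSucc + w (Fin.last D) * u j) = 0 := sum_eq_zero fun j _ => hcoord j
    rw [sum_add_distrib, ← mul_sum] at hsum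
    rw [Fin.sum_univ_castSucc] at hw
    have hprod : w (Fin.last D) * ((∑ j, (u j : ℝ)) - 1) = 0 := by linear_combination hsum - hw
    exact (mul_eq_zero.1 hprod).resolve_right (by exact_mod_cast sub_ne_zero.2 hu)
  intro t
  induction t using Fin.lastCases with
  | last => exact hlast
  | cast j => simpa [hlast] using hcoord j

theorem finrank_vectorSpan_apexSimplex (hu : ∑ j, u j ≠ 1) :
    Module.finrank ℝ (vectorSpan ℝ (apexSimplex u)) = D := by
  rw [apexSimplex, ← direction_affineSpan, affineSpan_convexHull, direction_affineSpan]
  exact (affineIndependent_apexSimplexVertex u hu).finrank_vectorSpan (Fintype.card_fin _)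

variable {q : ℕ}

theorem mem_smul_apexSimplex_iff (hq : 0 < q) (hu : ∑ j, u j = q + 1) {c : ℝ} (hc : 0 ≤ c)
    (x : Fin D → ℝ) :
    x ∈ c • apexSimplex u ↔ 0 ≤ ∑ j, x j - c ∧ ∀ j, (∑ i, x i - c) * u j ≤ q * x j := by
  have hu' : ∑ j, (u j : ℝ) = q + 1 := by exact_mod_cast hu
  rw [apexSimplex, mem_smul_convexHull_range_iff _ hc]
  constructor
  · rintro ⟨w, hw0, hw1, rfl⟩
    simp only [sum_smul_apexSimplexVertex_apply]
    have hsum : ∑ j, (w j.castSucc + w (Fin.last D) * u j) - c = q * w (Fin.last D) := by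
      rw [Fin.sum_univ_castSucc] at hw1
      rw [sum_add_distrib, ← mul_sum, hu']
      linear_combination hw1
    rw [hsum]
    refine ⟨mul_nonneg q.cast_nonneg (hw0 _), fun j => ?_⟩
    nlinarith [mul_nonneg q.cast_nonneg (hw0 j.castSucc)]
  · rintro ⟨h0, hx⟩
    have hq' : (0 : ℝ) < q := by exact_mod_cast hq
    set a := (∑ i, x i - c) / q with ha
    refine ⟨Fin.snoc (α := fun _ => ℝ) (fun j => x j - a * u j) a, fun t => ?_, ?_, ?_⟩
    · induction t using Fin.lastCases with
      | last => simpa using div_nonneg h0 hq'.le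
      | cast j =>
        rw [Fin.snoc_castSucc, sub_nonneg, ha, div_mul_eq_mul_div, div_le_iff₀ hq',
          mul_comm _ (q : ℝ)]
        exact hx j
    · simp only [Fin.sum_univ_castSucc, Fin.snoc_castSucc, Fin.snoc_last, sum_sub_distrib,
        ← mul_sum, hu', ha]
      field_simp
      ring
    · ext j
      rw [sum_smul_apexSimplexVertex_apply]
      simp

theorem intCast_mem_smul_apexSimplex_iff (hq : 0 < q) (hu : ∑ j, u j = q + 1) (n : ℕ)
    (z : Fin D → ℤ) :
    (fun j => (z j : ℝ)) ∈ (n : ℝ) • apexSimplex u ↔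
      0 ≤ ∑ j, z j - n ∧ ∀ j, (∑ i, z i - n) * u j ≤ q * z j := by
  rw [mem_smul_apexSimplex_iff u hq hu n.cast_nonneg]
  norm_cast

def boxCoord (q r : ℕ) (j : Fin D) : ℤ := ⌈(r * u j : ℚ) / q⌉

theorem boxCoord_le_iff (hq : 0 < q) {r : ℕ} {j : Fin D} {z : ℤ} :
    boxCoord u q r j ≤ z ↔ r * u j ≤ q * z := by
  rw [boxCoord, Int.ceil_le, div_le_iff₀ (by exact_mod_cast hq), mul_comm _ (q : ℚ)]
  norm_cast

def boxHeight (q r : ℕ) : ℕ := (∑ j, boxCoord u q r j - r).toNat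

theorem natCast_boxHeight (hq : 0 < q) (hu : ∑ j, u j = q + 1) (r : ℕ) :
    (boxHeight u q r : ℤ) = ∑ j, boxCoord u q r j - r := by
  refine Int.toNat_of_nonneg (sub_nonneg.2 (le_of_mul_le_mul_left ?_ (Int.natCast_pos.2 hq)))
  calc (q : ℤ) * r ≤ r * ∑ j, u j := by rw [hu]; nlinarith
    _ = ∑ j, r * u j := mul_sum _ _ _
    _ ≤ q * ∑ j, boxCoord u q r j := by
      rw [mul_sum]
      exact sum_le_sum fun j _ => (boxCoord_le_iff u hq).1 le_rfl

-- `⟨r, m⟩` encodes the lattice point `b_r + Σ_t m_t v_t`, where `b_r = boxCoord u q r`.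
def boxLift (q : ℕ) (p : Σ _ : ℕ, Fin (D + 1) → ℕ) (j : Fin D) : ℤ :=
  boxCoord u q p.1 j + p.2 j.castSucc + p.2 (Fin.last D) * u j

-- The filter is needed because `n - boxHeight u q r` truncates.
def latticeIndex (q n : ℕ) : Finset (Σ _ : ℕ, Fin (D + 1) → ℕ) :=
  {r ∈ range q | boxHeight u q r ≤ n}.sigma fun r =>
    Finset.Nat.antidiagonalTuple (D + 1) (n - boxHeight u q r)

theorem mem_latticeIndex {n : ℕ} {p : Σ _ : ℕ, Fin (D + 1) → ℕ} :
    p ∈ latticeIndex u q n ↔ p.1 < q ∧ boxHeight u q p.1 + ∑ t, p.2 t = n := by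
  simp only [latticeIndex, mem_sigma, mem_filter, mem_range, Finset.Nat.mem_antidiagonalTuple]
  omega

theorem sum_boxLift (hq : 0 < q) (hu : ∑ j, u j = q + 1) {n : ℕ} {p : Σ _ : ℕ, Fin (D + 1) → ℕ}
    (hp : p ∈ latticeIndex u q n) :
    ∑ j, boxLift u q p j - n = q * p.2 (Fin.last D) + p.1 := by
  obtain ⟨-, hn⟩ := (mem_latticeIndex u).1 hp
  have hh := natCast_boxHeight u hq hu p.1
  have hm := Fin.sum_univ_castSucc fun t => (p.2 t : ℤ)
  rw [← hn]
  simp only [boxLift, sum_add_distrib, ← mul_sum, hu]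
  push_cast at hm ⊢
  linear_combination -hh - hm

theorem intCast_boxLift_mem (hq : 0 < q) (hu : ∑ j, u j = q + 1) {n : ℕ}
    {p : Σ _ : ℕ, Fin (D + 1) → ℕ} (hp : p ∈ latticeIndex u q n) :
    (fun j => (boxLift u q p j : ℝ)) ∈ (n : ℝ) • apexSimplex u := by
  rw [intCast_mem_smul_apexSimplex_iff u hq hu, sum_boxLift u hq hu hp]
  refine ⟨by positivity, fun j => ?_⟩
  have hb := (boxCoord_le_iff u hq (r := p.1) (j := j)).1 le_rfl
  have hm : (0 : ℤ) ≤ q * p.2 j.castSucc := by positivity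
  rw [boxLift]
  linear_combination hb + hm

theorem boxLift_injOn (hq : 0 < q) (hu : ∑ j, u j = q + 1) (n : ℕ) :
    Set.InjOn (boxLift u q) (latticeIndex u q n) := by
  rintro ⟨r, m⟩ hp ⟨r', m'⟩ hp' heq
  have hr := ((mem_latticeIndex u).1 hp).1
  have hr' := ((mem_latticeIndex u).1 hp').1
  have hdiv : q * m (Fin.last D) + r = q * m' (Fin.last D) + r' := by
    have h := sum_boxLift u hq hu hp
    rw [heq, sum_boxLift u hq hu hp'] at h
    exact_mod_cast h.symm
  obtain rfl : r = r' := by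
    simpa [Nat.mul_add_mod, Nat.mod_eq_of_lt hr, Nat.mod_eq_of_lt hr'] using
      congrArg (· % q) hdiv
  have hlast : m (Fin.last D) = m' (Fin.last D) := by
    simpa [hq.ne'] using hdiv
  suffices hm : m = m' by rw [hm]
  funext t
  induction t using Fin.lastCases with
  | last => exact hlast
  | cast j =>
    have := congrFun heq j
    dsimp only [boxLift] at this
    rw [hlast] at this
    omega

theorem exists_boxLift_eq (hq : 0 < q) (hu : ∑ j, u j = q + 1) {n : ℕ} {z : Fin D → ℤ}
    (hn : 0 ≤ ∑ j, z j - n) (hz : ∀ j, (∑ i, z i - n) * u j ≤ q * z j) :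
    ∃ p ∈ latticeIndex u q n, boxLift u q p = z := by
  obtain ⟨T, hT⟩ : ∃ T : ℕ, ∑ j, z j - n = T := Int.eq_ofNat_of_zero_le hn
  set r := T % q
  set a := T / q
  have hTra : (T : ℤ) = q * a + r := by exact_mod_cast (Nat.div_add_mod T q).symm
  have hb (j : Fin D) : boxCoord u q r j ≤ z j - a * u j := by
    rw [boxCoord_le_iff u hq]
    linear_combination hz j - u j * (hT + hTra)
  let m : Fin (D + 1) → ℕ := Fin.snoc (fun j => (z j - a * u j - boxCoord u q r j).toNat) a
  have hm (j : Fin D) : (m j.castSucc : ℤ) = z j - a * u j - boxCoord u q r j := by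
    simp only [m, Fin.snoc_castSucc]
    exact Int.toNat_of_nonneg (by linarith [hb j])
  refine ⟨⟨r, m⟩, (mem_latticeIndex u).2 ⟨Nat.mod_lt T hq, ?_⟩, funext fun j => ?_⟩
  · have hh := natCast_boxHeight u hq hu r
    have hsum := Fin.sum_univ_castSucc fun t => (m t : ℤ)
    simp only [hm, m, Fin.snoc_last, sum_sub_distrib, ← mul_sum, hu] at hsum
    zify
    linear_combination hh + hsum + hT + hTra
  · dsimp only [boxLift]
    rw [hm, show m (Fin.last D) = a from Fin.snoc_last ..]
    ring

theorem ehrhart_apexSimplex (hq : 0 < q) (hu : ∑ j, u j = q + 1) (n : ℕ) :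
    ehrhart (apexSimplex u) n =
      ∑ r ∈ range q, if boxHeight u q r ≤ n then (n - boxHeight u q r + D).choose D else 0 := by
  have hlattice : {x | x ∈ (fun p => (n : ℝ) • p) '' apexSimplex u ∧ IsLatticePt x} =
      (fun p j => (boxLift u q p j : ℝ)) '' latticeIndex u q n := by
    ext x
    rw [Set.image_smul]
    constructor
    · rintro ⟨hx, hlat⟩
      choose z hz using hlat
      obtain rfl : x = fun j => (z j : ℝ) := funext hz
      obtain ⟨hn, hz⟩ := (intCast_mem_smul_apexSimplex_iff u hq hu n z).1 hx
      obtain ⟨p, hp, rfl⟩ := exists_boxLift_eq u hq hu hn hz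
      exact ⟨p, hp, rfl⟩
    · rintro ⟨p, hp, rfl⟩
      exact ⟨intCast_boxLift_mem u hq hu hp, fun j => ⟨_, rfl⟩⟩
  rw [ehrhart, hlattice, Set.InjOn.ncard_image, Set.ncard_coe_finset, latticeIndex, card_sigma,
    sum_filter]
  · refine sum_congr rfl fun r _ => ?_
    rw [Finset.Nat.card_antidiagonalTuple, Nat.multichoose_eq, add_right_comm, Nat.add_sub_cancel,
      add_comm D, Nat.choose_symm_add]
  · exact (Int.cast_injective.comp_left).comp_injOn (boxLift_injOn u hq hu n)

end ApexSimplex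

section ShiftedApex

variable (k ℓ : ℕ)

def shiftedApex : Fin (ℓ + (k + 2) + (2 * k + ℓ)) → ℤ :=
  Fin.append (Fin.append (fun _ => 1) (fun _ => 2)) (fun _ => -1)

theorem sum_comp_shiftedApex {M : Type*} [AddCommMonoid M] (f : ℤ → M) :
    ∑ j, f (shiftedApex k ℓ j) = ℓ • f 1 + (k + 2) • f 2 + (2 * k + ℓ) • f (-1) := by
  simp [shiftedApex, Fin.sum_univ_add]

theorem sum_shiftedApex : ∑ j, shiftedApex k ℓ j = (3 : ℕ) + 1 := by
  rw [sum_comp_shiftedApex k ℓ (M := ℤ) (fun z => z)]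
  simp
  ring

theorem sum_boxCoord_shiftedApex (r : ℕ) :
    ∑ j, boxCoord (shiftedApex k ℓ) 3 r j =
      ℓ * ⌈(r : ℚ) / 3⌉ + (k + 2) * ⌈(r * 2 : ℚ) / 3⌉ + (2 * k + ℓ) * ⌈(r * -1 : ℚ) / 3⌉ := by
  refine (sum_comp_shiftedApex k ℓ fun z => ⌈(r * z : ℚ) / (3 : ℕ)⌉).trans ?_
  simp

theorem card_filter_boxHeight_shiftedApex_eq (i : ℕ) :
    #{r ∈ range 3 | boxHeight (shiftedApex k ℓ) 3 r = i} =
      (if 0 = i then 1 else 0) + (if k + ℓ + 1 = i then 1 else 0) +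
        (if 2 * k + ℓ + 2 = i then 1 else 0) := by
  have h (r : ℕ) := natCast_boxHeight (shiftedApex k ℓ) three_pos (sum_shiftedApex k ℓ) r
  simp only [sum_boxCoord_shiftedApex] at h
  have h0 : boxHeight (shiftedApex k ℓ) 3 0 = 0 := by have := h 0; norm_num at this; omega
  have h1 : boxHeight (shiftedApex k ℓ) 3 1 = k + ℓ + 1 := by have := h 1; norm_num at this; omega
  have h2 : boxHeight (shiftedApex k ℓ) 3 2 = 2 * k + ℓ + 2 := by
    have := h 2; norm_num at this; omega
  rw [card_filter, sum_range_succ, sum_range_succ, sum_range_one, h0, h1, h2]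

end ShiftedApex

theorem exists_simplex_delta_shifted_general
    (k ℓ d d' : ℕ) (hd : d = 3 * k + 2) (hd' : d' = d + 2 * ℓ) :
    ∃ P : Set (Fin d' → ℝ),
      (∃ v : Fin (d' + 1) → Fin d' → ℝ,
        (∀ t, IsLatticePt (v t)) ∧ AffineIndependent ℝ v ∧
        P = convexHull ℝ (Set.range v)) ∧
      Module.finrank ℝ (vectorSpan ℝ P) = d' ∧
      deltaVector d' P 0 = 1 ∧
      deltaVector d' P (k + ℓ + 1) = 1 ∧
      deltaVector d' P (2 * k + ℓ + 2) = 1 ∧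
      ∀ j ≤ d', j ≠ 0 → j ≠ k + ℓ + 1 → j ≠ 2 * k + ℓ + 2 →
        deltaVector d' P j = 0 := by
  obtain rfl : d' = ℓ + (k + 2) + (2 * k + ℓ) := by omega
  have hu := sum_shiftedApex k ℓ
  have hu1 : ∑ j, shiftedApex k ℓ j ≠ 1 := by rw [hu]; norm_num
  have hδ (i : ℕ) := deltaVector_eq_card_of_ehrhart_eq _ _
    (ehrhart_apexSimplex (shiftedApex k ℓ) three_pos hu) i
  simp only [card_filter_boxHeight_shiftedApex_eq] at hδ
  refine ⟨apexSimplex (shiftedApex k ℓ), ⟨apexSimplexVertex _, isLatticePt_apexSimplexVertex _,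
    affineIndependent_apexSimplexVertex _ hu1, rfl⟩, finrank_vectorSpan_apexSimplex _ hu1,
    ?_, ?_, ?_, fun j _ hj0 hj1 hj2 => ?_⟩ <;> simp [hδ] <;> omega

/-- **Lemma 3.2.** For `d = 3k + 2`, `ℓ > 0` and `d' = d + 2ℓ`, there exists an
integral simplex `P ⊂ ℝ^{d'}` of dimension `d'` with
`δ_0 = δ_{k+ℓ+1} = δ_{2k+ℓ+2} = 1` and all other entries of its δ-vector `0`. -/
theorem exists_simplex_delta_shifted
    (k ℓ d d' : ℕ) (hℓ : 0 < ℓ) (hd : d = 3 * k + 2) (hd' : d' = d + 2 * ℓ) :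
    ∃ P : Set (Fin d' → ℝ),
      (∃ v : Fin (d' + 1) → Fin d' → ℝ,
        (∀ t, IsLatticePt (v t)) ∧ AffineIndependent ℝ v ∧
        P = convexHull ℝ (Set.range v)) ∧
      Module.finrank ℝ (vectorSpan ℝ P) = d' ∧
      deltaVector d' P 0 = 1 ∧
      deltaVector d' P (k + ℓ + 1) = 1 ∧
      deltaVector d' P (2 * k + ℓ + 2) = 1 ∧
      ∀ j ≤ d', j ≠ 0 → j ≠ k + ℓ + 1 → j ≠ 2 * k + ℓ + 2 →
        deltaVector d' P j = 0 :=
  exists_simplex_delta_shifted_general k ℓ d d' hd hd'
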